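/- arXiv:1810.09212 — 2 statements merged into one kernel-verified Lean document; each statement's English description precedes it below -/
import Mathlib

section
/- Let ε > 0 and T > 0. Suppose u : ℝ × ℝ² → ℝ is infinitely differentiable, set w = −ε²Δu + f(u), and assume that ∂ₜu = Δw on [0,T] × closure(Ω), that ∂ₙu(t,·) = 0 and ∂ₙw(t,·) = 0 at every point of the four open edges of ∂Ω for every t ∈ [0,T]. Then for every t ∈ (0,T) the map t ↦ E(u(t,·)) is differentiable with d/dt E(u(t,·)) = −∫_Ω |∇w(t,x)|² dx ≤ 0; in particular, the energy t ↦ E(u(t,·)) is non-increasing on [0,T]. -/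
/-!
Differentiating under the integral sign and exchanging `∂ₜ` with `∂ₓ`, `∂_y` gives
`d/dt E(u) = ∫_Ω ε² ∇u·∇uₜ + f(u) uₜ`. Green's first identity with `∂ₙu = 0` turns
`ε² ∇u·∇uₜ` into `-ε² Δu uₜ`, so the rate is `∫_Ω w uₜ = ∫_Ω w Δw`, and Green's identity once
more, now with `∂ₙw = 0`, makes it `-∫_Ω |∇w|²`. A nonpositive derivative makes the energy
antitone.
-/

open MeasureTheory Set

noncomputable def pdx (φ : ℝ × ℝ → ℝ) (p : ℝ × ℝ) : ℝ := fderiv ℝ φ p (1, 0)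

noncomputable def pdy (φ : ℝ × ℝ → ℝ) (p : ℝ × ℝ) : ℝ := fderiv ℝ φ p (0, 1)

noncomputable def lap (φ : ℝ × ℝ → ℝ) (p : ℝ × ℝ) : ℝ := pdx (pdx φ) p + pdy (pdy φ) p

/-- The open unit square `Ω = (0,1) × (0,1)`. -/
def unitSq : Set (ℝ × ℝ) := Ioo (0:ℝ) 1 ×ˢ Ioo (0:ℝ) 1

noncomputable def F (s : ℝ) : ℝ := (1/4) * (s^2 - 1)^2

noncomputable def fDW (s : ℝ) : ℝ := s^3 - s

noncomputable def dtu (u : ℝ → ℝ × ℝ → ℝ) (t : ℝ) (p : ℝ × ℝ) : ℝ :=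
  deriv (fun s => u s p) t

def ZeroNormalDeriv (φ : ℝ × ℝ → ℝ) : Prop :=
  (∀ y ∈ Ioo (0:ℝ) 1, -pdx φ (0, y) = 0 ∧ pdx φ (1, y) = 0) ∧
  (∀ x ∈ Ioo (0:ℝ) 1, -pdy φ (x, 0) = 0 ∧ pdy φ (x, 1) = 0)

/-- The Ginzburg–Landau free energy `E(v) = ∫_Ω ((ε²/2)|∇v|² + F(v))`. -/
noncomputable def energy (ε : ℝ) (v : ℝ × ℝ → ℝ) : ℝ :=
  ∫ p in unitSq, (ε^2/2 * ((pdx v p)^2 + (pdy v p)^2) + F (v p))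

open Function Metric

section Slices

variable {E G : Type*} [NormedAddCommGroup E] [NormedSpace ℝ E]
  [NormedAddCommGroup G] [NormedSpace ℝ G] {u : ℝ → E → G} {t : ℝ} {p : E}

theorem fderiv_apply_eq_fderiv_uncurry (hu : DifferentiableAt ℝ (uncurry u) (t, p)) (v : E) :
    fderiv ℝ (u t) p v = fderiv ℝ (uncurry u) (t, p) (0, v) := by
  have h : HasFDerivAt (u t) ((fderiv ℝ (uncurry u) (t, p)).comp (.inr ℝ ℝ E)) p :=
    hu.hasFDerivAt.comp p (hasFDerivAt_prodMk_right t p)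
  rw [h.fderiv]; rfl

theorem hasDerivAt_apply_of_uncurry (hu : DifferentiableAt ℝ (uncurry u) (t, p)) :
    HasDerivAt (fun s => u s p) (fderiv ℝ (uncurry u) (t, p) (1, 0)) t := by
  exact (hu.hasFDerivAt.comp t (hasFDerivAt_prodMk_left (𝕜 := ℝ) t p)).hasDerivAt

theorem ContDiff.apply_of_uncurry {n : WithTop ℕ∞} (hu : ContDiff ℝ n (uncurry u)) (t : ℝ) :
    ContDiff ℝ n (u t) :=
  hu.comp (contDiff_prodMk_right t)

theorem ContDiff.deriv_apply_of_uncurry {m n : WithTop ℕ∞} (hu : ContDiff ℝ n (uncurry u))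
    (hmn : m + 1 ≤ n) (t : ℝ) : ContDiff ℝ m (fun q => deriv (fun s => u s q) t) := by
  have hd : ∀ q, DifferentiableAt ℝ (uncurry u) (t, q) := fun q =>
    ((hu.of_le (le_trans le_add_self hmn)).differentiable one_ne_zero).differentiableAt
  simp_rw [fun q => (hasDerivAt_apply_of_uncurry (hd q)).deriv]
  exact (hu.fderiv_right hmn).clm_apply contDiff_const |>.comp (contDiff_prodMk_right t)

theorem ContDiff.uncurry_fderiv_apply {m n : WithTop ℕ∞} (hu : ContDiff ℝ n (uncurry u))
    (hmn : m + 1 ≤ n) (v : E) : ContDiff ℝ m (uncurry fun s q => fderiv ℝ (u s) q v) := by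
  have hd : ∀ x : ℝ × E, DifferentiableAt ℝ (uncurry u) x := fun x =>
    ((hu.of_le (le_trans le_add_self hmn)).differentiable one_ne_zero).differentiableAt
  have : (uncurry fun s q => fderiv ℝ (u s) q v) = fun x => fderiv ℝ (uncurry u) x (0, v) := by
    ext ⟨s, q⟩; exact fderiv_apply_eq_fderiv_uncurry (hd (s, q)) v
  rw [this]
  exact (hu.fderiv_right hmn).clm_apply contDiff_const

theorem hasDerivAt_fderiv_apply_of_uncurry (hu : ContDiff ℝ 2 (uncurry u)) (t : ℝ) (p v : E) :
    HasDerivAt (fun s => fderiv ℝ (u s) p v)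
      (fderiv ℝ (fun q => deriv (fun s => u s q) t) p v) t := by
  set U := uncurry u
  have hd : Differentiable ℝ U := hu.differentiable two_ne_zero
  have hd' : Differentiable ℝ (fderiv ℝ U) :=
    (hu.fderiv_right (m := 1) le_rfl).differentiable one_ne_zero
  have hpartial : ∀ w x, fderiv ℝ (fun y => fderiv ℝ U y w) x = (fderiv ℝ (fderiv ℝ U) x).flip w :=
    fun w x => by simp [fderiv_clm_apply (hd' x) (differentiableAt_const w)]
  have hx : (fun s => fderiv ℝ (u s) p v) = fun s => fderiv ℝ U (s, p) (0, v) :=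
    funext fun s => fderiv_apply_eq_fderiv_uncurry (hd _) v
  have ht : (fun q => deriv (fun s => u s q) t) = fun q => fderiv ℝ U (t, q) (1, 0) :=
    funext fun q => (hasDerivAt_apply_of_uncurry (hd _)).deriv
  rw [hx, ht, fderiv_apply_eq_fderiv_uncurry (u := fun s q => fderiv ℝ U (s, q) (1, 0))
    ((hd' _).clm_apply (differentiableAt_const _))]
  change HasDerivAt _ (fderiv ℝ (fun y => fderiv ℝ U y (1, 0)) (t, p) (0, v)) t
  rw [hpartial,
    ContinuousLinearMap.flip_apply, (hu.contDiffAt.isSymmSndFDerivAt (by simp)) (0, v) (1, 0),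
    ← ContinuousLinearMap.flip_apply, ← hpartial]
  exact hasDerivAt_apply_of_uncurry (u := fun s q => fderiv ℝ U (s, q) (0, v))
    ((hd' _).clm_apply (differentiableAt_const _))

end Slices

section ParametricIntegral

variable {E : Type*} [NormedAddCommGroup E] [NormedSpace ℝ E] [ProperSpace E]
  [MeasurableSpace E] [OpensMeasurableSpace E] {μ : Measure E} [IsFiniteMeasureOnCompacts μ]

theorem hasDerivAt_setIntegral_of_contDiff_uncurry {S : Set E} (hS : Bornology.IsBounded S)
    {g : ℝ → E → ℝ} (hg : ContDiff ℝ 1 (uncurry g)) (t : ℝ) :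
    HasDerivAt (fun s => ∫ p in S, g s p ∂μ) (∫ p in S, deriv (fun s => g s p) t ∂μ) t := by
  have hd : ∀ x : ℝ × E, DifferentiableAt ℝ (uncurry g) x := fun x =>
    (hg.differentiable one_ne_zero).differentiableAt
  have hK : IsCompact (closedBall t 1 ×ˢ closure S) :=
    (isCompact_closedBall t 1).prod hS.isCompact_closure
  obtain ⟨C, hC⟩ := hK.exists_bound_of_continuousOn ((hg.continuous_fderiv one_ne_zero).clm_apply
    (continuous_const (y := ((1 : ℝ), (0 : E))))).continuousOn
  have hfin : IsFiniteMeasure (μ.restrict S) := isFiniteMeasure_restrict.2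
    ((measure_mono subset_closure).trans_lt hS.isCompact_closure.measure_lt_top).ne
  have hbound : ∀ᵐ p ∂μ.restrict S, ∀ s ∈ ball t 1, ‖deriv (fun s => g s p) s‖ ≤ C := by
    filter_upwards [ae_restrict_of_ae_restrict_of_subset subset_closure
      (ae_restrict_mem isClosed_closure.measurableSet)] with p hp s hs
    rw [(hasDerivAt_apply_of_uncurry (hd (s, p))).deriv]
    exact hC (s, p) ⟨ball_subset_closedBall hs, hp⟩
  exact (hasDerivAt_integral_of_dominated_loc_of_deriv_le (ball_mem_nhds t one_pos)
    (.of_forall fun s => (hg.apply_of_uncurry s).continuous.aestronglyMeasurable)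
    (((hg.apply_of_uncurry t).continuous.continuousOn.integrableOn_compact
      hS.isCompact_closure).mono_set subset_closure)
    (hg.deriv_apply_of_uncurry (m := 0) (by simp) t).continuous.aestronglyMeasurable
    hbound (integrable_const C)
    (.of_forall fun p s _ =>
      (hasDerivAt_apply_of_uncurry (hd (s, p))).differentiableAt.hasDerivAt)).2

end ParametricIntegral

section UnitSquare

theorem isBounded_unitSq : Bornology.IsBounded unitSq :=
  isBounded_Ioo 0 1 |>.prod (isBounded_Ioo 0 1)

theorem measurableSet_unitSq : MeasurableSet unitSq :=
  measurableSet_Ioo.prod measurableSet_Ioo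

theorem unitSq_ae_eq_Icc : unitSq =ᵐ[volume] Icc ((0 : ℝ), (0 : ℝ)) (1, 1) := by
  rw [Icc_prod_eq, Measure.volume_eq_prod]
  exact Measure.set_prod_ae_eq Ioo_ae_eq_Icc Ioo_ae_eq_Icc

theorem Continuous.integrableOn_unitSq {f : ℝ × ℝ → ℝ} (hf : Continuous f) :
    IntegrableOn f unitSq :=
  (hf.continuousOn.integrableOn_compact isBounded_unitSq.isCompact_closure).mono_set subset_closure

theorem intervalIntegral_eq_zero_of_eqOn_Ioo {E : Type*} [NormedAddCommGroup E] [NormedSpace ℝ E]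
    {f : ℝ → E} {a b : ℝ} (hab : a ≤ b) (hf : EqOn f 0 (Ioo a b)) : ∫ x in a..b, f x = 0 := by
  rw [intervalIntegral.integral_of_le hab, integral_Ioc_eq_integral_Ioo,
    setIntegral_congr_fun measurableSet_Ioo hf, Pi.zero_def, integral_zero]

variable {m n : WithTop ℕ∞} {φ ψ : ℝ × ℝ → ℝ}

theorem contDiff_pdx (hφ : ContDiff ℝ n φ) (hmn : m + 1 ≤ n) : ContDiff ℝ m (pdx φ) :=
  (hφ.fderiv_right hmn).clm_apply contDiff_const

theorem contDiff_pdy (hφ : ContDiff ℝ n φ) (hmn : m + 1 ≤ n) : ContDiff ℝ m (pdy φ) :=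
  (hφ.fderiv_right hmn).clm_apply contDiff_const

theorem contDiff_lap (hφ : ContDiff ℝ n φ) (hmn : m + 2 ≤ n) : ContDiff ℝ m (lap φ) := by
  have hmn' : m + 1 + 1 ≤ n := by rwa [add_assoc, one_add_one_eq_two]
  exact (contDiff_pdx (contDiff_pdx hφ hmn') le_rfl).add
    (contDiff_pdy (contDiff_pdy hφ hmn') le_rfl)

theorem continuous_pdx (hφ : ContDiff ℝ n φ) (hn : 1 ≤ n) : Continuous (pdx φ) :=
  (contDiff_pdx hφ (m := 0) (by simpa using hn)).continuous

theorem continuous_pdy (hφ : ContDiff ℝ n φ) (hn : 1 ≤ n) : Continuous (pdy φ) :=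
  (contDiff_pdy hφ (m := 0) (by simpa using hn)).continuous

theorem continuous_lap (hφ : ContDiff ℝ n φ) (hn : 2 ≤ n) : Continuous (lap φ) :=
  (contDiff_lap hφ (m := 0) (by simpa using hn)).continuous

theorem ZeroNormalDeriv.setIntegral_grad_mul_add_mul_lap_eq_zero (hbc : ZeroNormalDeriv φ)
    (hφ : ContDiff ℝ 2 φ) (hψ : ContDiff ℝ 1 ψ) :
    ∫ p in unitSq, (pdx φ p * pdx ψ p + pdy φ p * pdy ψ p + ψ p * lap φ p) = 0 := by
  have hφx : ContDiff ℝ 1 (pdx φ) := contDiff_pdx hφ le_rfl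
  have hφy : ContDiff ℝ 1 (pdy φ) := contDiff_pdy hφ le_rfl
  have hψd : Differentiable ℝ ψ := hψ.differentiable one_ne_zero
  have hdiv := integral_divergence_prod_Icc_of_hasFDerivAt_off_countable_of_le
    (fun p => ψ p * pdx φ p) (fun p => ψ p * pdy φ p)
    (fun p => ψ p • fderiv ℝ (pdx φ) p + pdx φ p • fderiv ℝ ψ p)
    (fun p => ψ p • fderiv ℝ (pdy φ) p + pdy φ p • fderiv ℝ ψ p)
    (0, 0) (1, 1) (by norm_num) ∅ countable_empty
    (hψ.continuous.mul hφx.continuous).continuousOn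
    (hψ.continuous.mul hφy.continuous).continuousOn
    (fun p _ => (hψd p).hasFDerivAt.mul (hφx.differentiable one_ne_zero p).hasFDerivAt)
    (fun p _ => (hψd p).hasFDerivAt.mul (hφy.differentiable one_ne_zero p).hasFDerivAt)
  have hflux : (fun p => (ψ p • fderiv ℝ (pdx φ) p + pdx φ p • fderiv ℝ ψ p) (1, 0)
      + (ψ p • fderiv ℝ (pdy φ) p + pdy φ p • fderiv ℝ ψ p) (0, 1))
      = fun p => pdx φ p * pdx ψ p + pdy φ p * pdy ψ p + ψ p * lap φ p := by
    ext p
    simp only [add_apply, smul_apply, smul_eq_mul, lap]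
    unfold pdx pdy
    ring
  have hcont : Continuous fun p => pdx φ p * pdx ψ p + pdy φ p * pdy ψ p + ψ p * lap φ p := by
    have := continuous_pdx hψ le_rfl
    have := continuous_pdy hψ le_rfl
    have := continuous_lap hφ le_rfl
    fun_prop
  rw [hflux] at hdiv
  have hedge : ∀ {h : ℝ → ℝ}, EqOn h 0 (Ioo 0 1) → ∫ x in (0 : ℝ)..1, h x = 0 :=
    intervalIntegral_eq_zero_of_eqOn_Ioo zero_le_one
  rw [setIntegral_congr_set unitSq_ae_eq_Icc,
    hdiv (hcont.continuousOn.integrableOn_compact isCompact_Icc)]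
  simp only
  rw [hedge fun x hx => by simp [(hbc.2 x hx).2],
    hedge fun x hx => by simp [neg_eq_zero.1 (hbc.2 x hx).1],
    hedge fun y hy => by simp [(hbc.1 y hy).2],
    hedge fun y hy => by simp [neg_eq_zero.1 (hbc.1 y hy).1]]
  norm_num

end UnitSquare

section Energy

theorem hasDerivAt_F (y : ℝ) : HasDerivAt F (fDW y) y := by
  have h := (((hasDerivAt_pow 2 y).sub_const 1).pow 2).const_mul (1 / 4 : ℝ)
  exact h.congr_deriv (by unfold fDW; push_cast; ring)

theorem contDiff_F {n : WithTop ℕ∞} : ContDiff ℝ n F := by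
  unfold F; fun_prop

theorem contDiff_fDW {n : WithTop ℕ∞} : ContDiff ℝ n fDW := by
  unfold fDW; fun_prop

noncomputable def energyDensity (ε : ℝ) (v : ℝ × ℝ → ℝ) (p : ℝ × ℝ) : ℝ :=
  ε ^ 2 / 2 * ((pdx v p) ^ 2 + (pdy v p) ^ 2) + F (v p)

noncomputable def energyVariation (ε : ℝ) (v v' : ℝ × ℝ → ℝ) (p : ℝ × ℝ) : ℝ :=
  ε ^ 2 * (pdx v p * pdx v' p + pdy v p * pdy v' p) + fDW (v p) * v' p

variable {u : ℝ → ℝ × ℝ → ℝ}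

theorem hasDerivAt_energyDensity (hu : ContDiff ℝ 2 (uncurry u)) (ε t : ℝ) (p : ℝ × ℝ) :
    HasDerivAt (fun s => energyDensity ε (u s) p) (energyVariation ε (u t) (dtu u t) p) t := by
  have hx : HasDerivAt (fun s => pdx (u s) p) (pdx (dtu u t) p) t :=
    hasDerivAt_fderiv_apply_of_uncurry hu t p (1, 0)
  have hy : HasDerivAt (fun s => pdy (u s) p) (pdy (dtu u t) p) t :=
    hasDerivAt_fderiv_apply_of_uncurry hu t p (0, 1)
  have hu' : HasDerivAt (fun s => u s p) (dtu u t p) t :=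
    (hasDerivAt_apply_of_uncurry ((hu.differentiable two_ne_zero) _)).differentiableAt.hasDerivAt
  refine ((((hx.pow 2).add (hy.pow 2)).const_mul (ε ^ 2 / 2)).add
    ((hasDerivAt_F (u t p)).comp t hu')).congr_deriv ?_
  simp only [energyVariation]
  push_cast
  ring

theorem hasDerivAt_energy (hu : ContDiff ℝ 2 (uncurry u)) (ε t : ℝ) :
    HasDerivAt (fun s => energy ε (u s))
      (∫ p in unitSq, energyVariation ε (u t) (dtu u t) p) t := by
  have hdensity : ContDiff ℝ 1 (uncurry fun s => energyDensity ε (u s)) := by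
    have hx := hu.uncurry_fderiv_apply (m := 1) le_rfl (1, 0)
    have hy := hu.uncurry_fderiv_apply (m := 1) le_rfl (0, 1)
    exact (contDiff_const.mul ((hx.pow 2).add (hy.pow 2))).add
      (contDiff_F.comp (hu.of_le one_le_two))
  have h := hasDerivAt_setIntegral_of_contDiff_uncurry (μ := volume) isBounded_unitSq hdensity t
  simp only [fun p => (hasDerivAt_energyDensity hu ε t p).deriv] at h
  exact h

theorem setIntegral_energyVariation_eq {ε : ℝ} {v v' w : ℝ × ℝ → ℝ} (hv : ContDiff ℝ 2 v)
    (hv' : ContDiff ℝ 1 v') (hw : ContDiff ℝ 2 w)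
    (hwv : ∀ p ∈ unitSq, w p = -ε ^ 2 * lap v p + fDW (v p))
    (hv'w : ∀ p ∈ unitSq, v' p = lap w p) (hbcv : ZeroNormalDeriv v) (hbcw : ZeroNormalDeriv w) :
    ∫ p in unitSq, energyVariation ε v v' p = -∫ p in unitSq, ((pdx w p) ^ 2 + (pdy w p) ^ 2) := by
  have hsplit : EqOn (energyVariation ε v v')
      (fun p => ε ^ 2 * (pdx v p * pdx v' p + pdy v p * pdy v' p + v' p * lap v p)
        + ((pdx w p * pdx w p + pdy w p * pdy w p + w p * lap w p)
          - ((pdx w p) ^ 2 + (pdy w p) ^ 2))) unitSq := by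
    intro p hp
    simp only [energyVariation]
    rw [← hv'w p hp, hwv p hp]
    ring
  have := continuous_pdx hv one_le_two
  have := continuous_pdy hv one_le_two
  have := continuous_lap hv le_rfl
  have := continuous_pdx hv' le_rfl
  have := continuous_pdy hv' le_rfl
  have := continuous_pdx hw one_le_two
  have := continuous_pdy hw one_le_two
  have := continuous_lap hw le_rfl
  have := hv'.continuous
  have := hw.continuous
  rw [setIntegral_congr_fun measurableSet_unitSq hsplit,
    integral_add (Continuous.integrableOn_unitSq (by fun_prop))
      (Continuous.integrableOn_unitSq (by fun_prop)), integral_const_mul,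
    integral_sub (Continuous.integrableOn_unitSq (by fun_prop))
      (Continuous.integrableOn_unitSq (by fun_prop)),
    hbcv.setIntegral_grad_mul_add_mul_lap_eq_zero hv hv',
    hbcw.setIntegral_grad_mul_add_mul_lap_eq_zero hw (hw.of_le one_le_two)]
  ring

end Energy

theorem energy_decay_general (ε T : ℝ)
    (u : ℝ → ℝ × ℝ → ℝ) (hu : ContDiff ℝ (⊤ : ℕ∞) (Function.uncurry u))
    (w : ℝ → ℝ × ℝ → ℝ)
    (hw : ∀ t p, w t p = -ε^2 * lap (u t) p + fDW (u t p))
    (heq : ∀ t ∈ Icc (0:ℝ) T, ∀ p ∈ closure unitSq, dtu u t p = lap (w t) p)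
    (hbcu : ∀ t ∈ Icc (0:ℝ) T, ZeroNormalDeriv (u t))
    (hbcw : ∀ t ∈ Icc (0:ℝ) T, ZeroNormalDeriv (w t)) :
    (∀ t ∈ Ioo (0:ℝ) T,
      HasDerivAt (fun s => energy ε (u s))
        (-∫ p in unitSq, ((pdx (w t) p)^2 + (pdy (w t) p)^2)) t ∧
      -∫ p in unitSq, ((pdx (w t) p)^2 + (pdy (w t) p)^2) ≤ 0) ∧
    (∀ t₁ ∈ Icc (0:ℝ) T, ∀ t₂ ∈ Icc (0:ℝ) T, t₁ ≤ t₂ →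
      energy ε (u t₂) ≤ energy ε (u t₁)) := by
  have hu2 : ContDiff ℝ 2 (uncurry u) := hu.of_le (by norm_cast)
  have hrate : ∀ t ∈ Icc (0:ℝ) T, HasDerivAt (fun s => energy ε (u s))
      (-∫ p in unitSq, ((pdx (w t) p)^2 + (pdy (w t) p)^2)) t := by
    intro t ht
    have hwt : ContDiff ℝ 2 (w t) := by
      rw [show w t = _ from funext (hw t)]
      exact contDiff_const.mul (contDiff_lap (hu.apply_of_uncurry t) (by norm_cast)) |>.add
        (contDiff_fDW.comp (hu2.apply_of_uncurry t))
    rw [← setIntegral_energyVariation_eq (hu2.apply_of_uncurry t)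
      (hu2.deriv_apply_of_uncurry le_rfl t) hwt (fun p _ => hw t p)
      (fun p hp => heq t ht p (subset_closure hp)) (hbcu t ht) (hbcw t ht)]
    exact hasDerivAt_energy hu2 ε t
  have hdissipation : ∀ t, -∫ p in unitSq, ((pdx (w t) p)^2 + (pdy (w t) p)^2) ≤ 0 := fun t =>
    neg_nonpos.2 (setIntegral_nonneg measurableSet_unitSq fun p _ => by positivity)
  refine ⟨fun t ht => ⟨hrate t (Ioo_subset_Icc_self ht), hdissipation t⟩, ?_⟩
  have hcont : Continuous fun s => energy ε (u s) :=
    continuous_iff_continuousAt.2 fun s => (hasDerivAt_energy hu2 ε s).continuousAt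
  refine fun t₁ h₁ t₂ h₂ h₁₂ => antitoneOn_of_hasDerivWithinAt_nonpos (convex_Icc 0 T)
    hcont.continuousOn (fun t ht => ?_) (fun t _ => hdissipation t) h₁ h₂ h₁₂
  rw [interior_Icc] at ht ⊢
  exact (hrate t (Ioo_subset_Icc_self ht)).hasDerivWithinAt

/-- **Energy decay for the Cahn–Hilliard equation.** With `w = -ε²Δu + f(u)`, if
`∂ₜu = Δw` on `[0,T] × closure Ω` and `∂ₙu = ∂ₙw = 0` on the four open edges of `∂Ω`,
then for `t ∈ (0,T)` the energy is differentiable in time with derivative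
`-∫_Ω |∇w(t,·)|² ≤ 0`; in particular the energy is non-increasing on `[0,T]`. -/
theorem energy_decay (ε T : ℝ) (hε : 0 < ε) (hT : 0 < T)
    (u : ℝ → ℝ × ℝ → ℝ) (hu : ContDiff ℝ (⊤ : ℕ∞) (Function.uncurry u))
    (w : ℝ → ℝ × ℝ → ℝ)
    (hw : ∀ t p, w t p = -ε^2 * lap (u t) p + fDW (u t p))
    (heq : ∀ t ∈ Icc (0:ℝ) T, ∀ p ∈ closure unitSq, dtu u t p = lap (w t) p)
    (hbcu : ∀ t ∈ Icc (0:ℝ) T, ZeroNormalDeriv (u t))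
    (hbcw : ∀ t ∈ Icc (0:ℝ) T, ZeroNormalDeriv (w t)) :
    (∀ t ∈ Ioo (0:ℝ) T,
      HasDerivAt (fun s => energy ε (u s))
        (-∫ p in unitSq, ((pdx (w t) p)^2 + (pdy (w t) p)^2)) t ∧
      -∫ p in unitSq, ((pdx (w t) p)^2 + (pdy (w t) p)^2) ≤ 0) ∧
    (∀ t₁ ∈ Icc (0:ℝ) T, ∀ t₂ ∈ Icc (0:ℝ) T, t₁ ≤ t₂ →
      energy ε (u t₂) ≤ energy ε (u t₁)) :=
  energy_decay_general ε T u hu w hw heq hbcu hbcw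
end

section
/- Fix h > 0, z ∈ ℝ², and data u₀, …, u₆ ∈ ℝ, and let p ∈ ℙ₂ be any minimizer of the least-squares functional Σ_{j=0}^{6} (p(z_j) − u_j)² over ℙ₂. Then the (constant) mixed second partial derivative of p satisfies ∂²p/∂x∂y (z) = (2u₀ − u₁ + u₂ − u₃ − u₄ + u₅ − u₆) / (2h²). -/
open Finset

/-- `p : ℝ² → ℝ` is a polynomial function of total degree at most 2, i.e. a member of
the six-dimensional space `ℙ₂`. -/
def IsP2 (p : ℝ × ℝ → ℝ) : Prop :=
  ∃ a b c d e f : ℝ, ∀ q : ℝ × ℝ,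
    p q = a + b * q.1 + c * q.2 + d * q.1 ^ 2 + e * q.1 * q.2 + f * q.2 ^ 2

/-- The seven sampling points `z₀, …, z₆` of the first-layer patch of a vertex `z` of a
regular-pattern uniform triangular mesh with mesh size `h`. -/
def pts (h : ℝ) (z : ℝ × ℝ) : Fin 7 → ℝ × ℝ :=
  ![z, z + (h, 0), z + (h, h), z + (0, h), z - (h, 0), z - (h, h), z - (0, h)]

/-- The least-squares functional `Σ_{j=0}^{6} (p(z_j) − u_j)²`. -/
noncomputable def LS (h : ℝ) (z : ℝ × ℝ) (u : Fin 7 → ℝ) (p : ℝ × ℝ → ℝ) : ℝ :=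
  ∑ j : Fin 7, (p (pts h z j) - u j) ^ 2
/-!
A least-squares fit `p` over `ℙ₂` has its residual `p(z_j) − u_j` orthogonal to the samples
of every `q ∈ ℙ₂` (perturb `p` to `p + t q` and look at the `t`-linear term). The weights
`w = (2, −1, 1, −1, −1, 1, −1)` form a finite-difference stencil that is exact on `ℙ₂` for
`2h² ∂²/∂x∂y`, and `h² w` happens to be the sample vector of the quadratic
`2h² − 3X² + 5XY − 3Y²` in `(X, Y) = x − z`. Orthogonality of the residual to `w` thus gives
`2h² ∂²p/∂x∂y = Σ w_j p(z_j) = Σ w_j u_j`.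
-/

lemma pdx_quadratic (a b c d e f : ℝ) :
    pdx (fun q : ℝ × ℝ => a + b * q.1 + c * q.2 + d * q.1 ^ 2 + e * q.1 * q.2 + f * q.2 ^ 2) =
      fun q => b + 2 * d * q.1 + e * q.2 := by
  funext q
  simp (disch := fun_prop) only [pdx, fderiv_fun_add, fderiv_fun_mul, fderiv_fun_pow,
    fderiv_fun_const, fderiv_fst, fderiv_snd, add_apply, smul_apply, zero_apply,
    ContinuousLinearMap.coe_fst', ContinuousLinearMap.coe_snd', Pi.zero_apply, smul_eq_mul]
  ring

lemma pdy_affine (a b c : ℝ) (z : ℝ × ℝ) :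
    pdy (fun q : ℝ × ℝ => a + b * q.1 + c * q.2) z = c := by
  simp (disch := fun_prop) [pdy, fderiv_fun_add, fderiv_const_mul, fderiv_fst, fderiv_snd]

lemma IsP2.add_const_mul {p q : ℝ × ℝ → ℝ} (hp : IsP2 p) (hq : IsP2 q) (t : ℝ) :
    IsP2 fun x => p x + t * q x := by
  obtain ⟨a, b, c, d, e, f, hp⟩ := hp
  obtain ⟨a', b', c', d', e', f', hq⟩ := hq
  exact ⟨a + t * a', b + t * b', c + t * c', d + t * d', e + t * e', f + t * f',
    fun x => by simp only [hp, hq]; ring⟩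

lemma IsP2.comp_sub {p : ℝ × ℝ → ℝ} (hp : IsP2 p) (z : ℝ × ℝ) : IsP2 fun x => p (x - z) := by
  obtain ⟨a, b, c, d, e, f, hp⟩ := hp
  refine ⟨a - b * z.1 - c * z.2 + d * z.1 ^ 2 + e * z.1 * z.2 + f * z.2 ^ 2,
    b - 2 * d * z.1 - e * z.2, c - e * z.1 - 2 * f * z.2, d, e, f, fun x => ?_⟩
  simp only [hp, Prod.fst_sub, Prod.snd_sub]
  ring

lemma sum_mul_eq_zero_of_forall_sum_sq_le {ι : Type*} [Fintype ι] (r v : ι → ℝ)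
    (hmin : ∀ t : ℝ, ∑ i, r i ^ 2 ≤ ∑ i, (r i + t * v i) ^ 2) : ∑ i, r i * v i = 0 := by
  set S := ∑ i, r i * v i
  set V := ∑ i, v i ^ 2
  have hV : 0 ≤ V := Finset.sum_nonneg fun i _ => sq_nonneg (v i)
  have hexpand (t : ℝ) : ∑ i, (r i + t * v i) ^ 2 = ∑ i, r i ^ 2 + 2 * t * S + t ^ 2 * V := by
    simp only [S, V, Finset.mul_sum, ← Finset.sum_add_distrib]
    exact Finset.sum_congr rfl fun i _ => by ring
  -- at `t = -S / (V + 1)` the right side falls short of the left by `S² (V + 2) / (V + 1)²`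
  have h := hmin (-S / (V + 1))
  rw [hexpand] at h
  have : S ^ 2 * (V + 2) ≤ 0 := by
    field_simp at h
    nlinarith
  nlinarith [sq_nonneg S]

lemma LS.sum_residual_mul_eq_zero {h : ℝ} {z : ℝ × ℝ} {u : Fin 7 → ℝ} {p q : ℝ × ℝ → ℝ}
    (hp : IsP2 p) (hmin : ∀ q : ℝ × ℝ → ℝ, IsP2 q → LS h z u p ≤ LS h z u q) (hq : IsP2 q) :
    ∑ j, (p (pts h z j) - u j) * q (pts h z j) = 0 := by
  refine sum_mul_eq_zero_of_forall_sum_sq_le _ _ fun t => ?_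
  simpa only [LS, add_sub_right_comm] using hmin _ (hp.add_const_mul hq t)

def mixedStencil : Fin 7 → ℝ := ![2, -1, 1, -1, -1, 1, -1]

lemma sum_mixedStencil_mul (v : Fin 7 → ℝ) :
    ∑ j, mixedStencil j * v j = 2 * v 0 - v 1 + v 2 - v 3 - v 4 + v 5 - v 6 := by
  simp only [mixedStencil, Fin.sum_univ_seven, Fin.isValue, Matrix.cons_val_zero,
    Matrix.cons_val_one, Matrix.cons_val]
  ring

lemma IsP2.sum_mixedStencil_mul_eq {p : ℝ × ℝ → ℝ} (hp : IsP2 p) (h : ℝ) (z : ℝ × ℝ) :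
    ∑ j, mixedStencil j * p (pts h z j) = 2 * h ^ 2 * pdy (pdx p) z := by
  obtain ⟨a, b, c, d, e, f, hp⟩ := hp
  rw [funext hp, pdx_quadratic, pdy_affine, sum_mixedStencil_mul]
  simp only [pts, Fin.isValue, Matrix.cons_val_zero, Matrix.cons_val_one, Matrix.cons_val,
    Prod.fst_add, Prod.snd_add, Prod.fst_sub, Prod.snd_sub]
  ring

lemma exists_isP2_sample_eq_mixedStencil (h : ℝ) (z : ℝ × ℝ) :
    ∃ g, IsP2 g ∧ ∀ j, g (pts h z j) = h ^ 2 * mixedStencil j := by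
  have hg : IsP2 fun x : ℝ × ℝ => 2 * h ^ 2 - 3 * x.1 ^ 2 + 5 * x.1 * x.2 - 3 * x.2 ^ 2 :=
    ⟨2 * h ^ 2, 0, 0, -3, 5, -3, fun x => by ring⟩
  refine ⟨_, hg.comp_sub z, fun j => ?_⟩
  fin_cases j <;>
    simp only [pts, mixedStencil, Fin.reduceFinMk, Fin.zero_eta, Fin.mk_one, Fin.isValue,
      Matrix.cons_val, Matrix.cons_val_zero, Matrix.cons_val_one, Prod.fst_add, Prod.snd_add,
      Prod.fst_sub, Prod.snd_sub] <;>
    ring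

/-- For any least-squares fitted quadratic `p` on the seven-point patch, the recovered
mixed second derivative at `z` is `(2u₀ − u₁ + u₂ − u₃ − u₄ + u₅ − u₆)/(2h²)`. -/
theorem recovered_xy_derivative (h : ℝ) (hh : 0 < h) (z : ℝ × ℝ) (u : Fin 7 → ℝ)
    (p : ℝ × ℝ → ℝ) (hp : IsP2 p)
    (hmin : ∀ q : ℝ × ℝ → ℝ, IsP2 q → LS h z u p ≤ LS h z u q) :
    pdy (pdx p) z = (2 * u 0 - u 1 + u 2 - u 3 - u 4 + u 5 - u 6) / (2 * h ^ 2) := by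
  obtain ⟨g, hg, hg_pts⟩ := exists_isP2_sample_eq_mixedStencil h z
  have horth := LS.sum_residual_mul_eq_zero hp hmin hg
  have hfit : ∑ j, mixedStencil j * p (pts h z j) = ∑ j, mixedStencil j * u j := by
    simp only [hg_pts, mul_left_comm _ (h ^ 2), ← Finset.mul_sum] at horth
    have := (mul_eq_zero.mp horth).resolve_left (by positivity)
    simp only [mul_comm _ (mixedStencil _), mul_sub, Finset.sum_sub_distrib] at this
    exact sub_eq_zero.mp this
  rw [hp.sum_mixedStencil_mul_eq, sum_mixedStencil_mul] at hfit
  rw [← hfit]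
  field_simp
end
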